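/- Let R be a commutative ℚ-algebra, let E, λ ∈ R, and let D denote the formal derivative on R⟦a⟧. Set g := exp(E·log(1+λ·a)) ∈ R⟦a⟧ and h := exp(−a)·g. Then for every natural number p, the constant coefficient of (1+D)^p h equals λ^p·E·(E−1)⋯(E−p+1). (This is the case X = p a nonnegative integer of the identity (1+∂_a)^X e^{−a}(1+λa)^{E}|_{a=0} = (−λ)^X Γ(−E+X)/Γ(−E), to which the general case is reduced in the paper.) -/

import Mathlib

open PowerSeries Finset

noncomputable section

/-- For `f` with zero constant term, this is `exp f = ∑_{k≥0} fᵏ/k!`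
(truncated sum; valid since `coeff n (f^k) = 0` for `k > n`).  In particular
`expPS (-X) = exp(-a) = ∑ (-1)^k a^k/k!`. -/
def expPS {R : Type*} [CommRing R] [Algebra ℚ R] (f : PowerSeries R) : PowerSeries R :=
  PowerSeries.mk fun n => ∑ k ∈ Finset.range (n + 1),
    algebraMap ℚ R (1 / k.factorial) * PowerSeries.coeff (R := R) n (f ^ k)

/-- For `f` with zero constant term, this is `log (1+f) = ∑_{k≥1} (-1)^{k-1} fᵏ/k`. -/
def logOnePlus {R : Type*} [CommRing R] [Algebra ℚ R] (f : PowerSeries R) : PowerSeries R :=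
  PowerSeries.mk fun n => ∑ k ∈ Finset.range (n + 1),
    algebraMap ℚ R ((-1) ^ (k + 1) / k) * PowerSeries.coeff (R := R) n (f ^ k)

namespace Statement4Aux

variable {R : Type*} [CommRing R] [Algebra ℚ R]

lemma coeff_expPS (f : PowerSeries R) (n : ℕ) :
    coeff (R := R) n (expPS f) =
      ∑ k ∈ range (n + 1), algebraMap ℚ R (1 / k.factorial) * coeff (R := R) n (f ^ k) := by
  simp [expPS]

lemma coeff_logOnePlus (f : PowerSeries R) (n : ℕ) :
    coeff (R := R) n (logOnePlus f) =
      ∑ k ∈ range (n + 1), algebraMap ℚ R ((-1) ^ (k + 1) / k) * coeff (R := R) n (f ^ k) := by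
  simp [logOnePlus]

lemma coeff_pow_eq_zero {f : PowerSeries R} (hf : constantCoeff (R := R) f = 0) {n k : ℕ}
    (h : n < k) : coeff (R := R) n (f ^ k) = 0 := by
  obtain ⟨g, rfl⟩ := X_dvd_iff.mpr hf
  rw [mul_pow, coeff_X_pow_mul', if_neg (by omega)]

/-- truncated partial sums of the exponential series -/
def S (f : PowerSeries R) (N : ℕ) : PowerSeries R :=
  ∑ k ∈ range N, C (R := R) (algebraMap ℚ R (1 / k.factorial)) * f ^ k

lemma coeff_expPS_eq_coeff_S {f : PowerSeries R} (hf : constantCoeff (R := R) f = 0) {n N : ℕ}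
    (h : n < N) : coeff (R := R) n (expPS f) = coeff (R := R) n (S f N) := by
  rw [coeff_expPS, S, map_sum]
  simp only [coeff_C_mul]
  apply Finset.sum_subset
  · intro k hk
    simp only [mem_range] at *
    omega
  · intro k _ hk
    simp only [mem_range, not_lt] at hk
    rw [coeff_pow_eq_zero hf (by omega), mul_zero]

lemma derivative_S (f : PowerSeries R) (N : ℕ) :
    derivative R (S f (N + 1)) = derivative R f * S f N := by
  rw [S, S, map_sum, Finset.sum_range_succ', Finset.mul_sum]
  have h0 : derivative R (C (R := R) (algebraMap ℚ R (1 / (Nat.factorial 0 : ℚ))) * f ^ 0) = 0 := by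
    simp
  rw [h0, add_zero]
  apply Finset.sum_congr rfl
  intro k _
  have hD : derivative R (C (R := R) (algebraMap ℚ R (1 / ((k + 1).factorial : ℚ))) * f ^ (k + 1)) =
      C (R := R) (algebraMap ℚ R (1 / ((k + 1).factorial : ℚ))) * ((k + 1) • (f ^ k * derivative R f)) := by
    rw [Derivation.leibniz, Derivation.leibniz_pow, derivative_C, smul_zero, add_zero]
    simp only [Nat.add_sub_cancel, smul_eq_mul, smul_smul]
    try ring
  rw [hD]
  have hC : (C (R := R) (algebraMap ℚ R (1 / ((k + 1).factorial : ℚ)))) * ((k + 1 : ℕ) • (1 : PowerSeries R)) =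
      C (R := R) (algebraMap ℚ R (1 / (k.factorial : ℚ))) := by
    rw [nsmul_eq_mul, mul_one, ← map_natCast (C (R := R)) (k + 1), ← map_mul,
      ← map_natCast (algebraMap ℚ R) (k + 1), ← map_mul]
    congr 1
    congr 1
    rw [Nat.factorial_succ]
    have h2 : ((k.factorial : ℚ)) ≠ 0 := by positivity
    have h3 : ((k : ℚ) + 1) ≠ 0 := by positivity
    push_cast
    field_simp <;> ring
  calc C (R := R) (algebraMap ℚ R (1 / ((k + 1).factorial : ℚ))) * ((k + 1) • (f ^ k * derivative R f))
      = (C (R := R) (algebraMap ℚ R (1 / ((k + 1).factorial : ℚ))) * ((k + 1 : ℕ) • (1 : PowerSeries R)))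
        * (f ^ k * derivative R f) := by
        simp only [nsmul_eq_mul, mul_one]; ring
    _ = derivative R f * (C (R := R) (algebraMap ℚ R (1 / (k.factorial : ℚ))) * f ^ k) := by
        rw [hC]; ring

lemma derivative_expPS {f : PowerSeries R} (hf : constantCoeff (R := R) f = 0) :
    derivative R (expPS f) = derivative R f * expPS f := by
  ext n
  rw [coeff_derivative, coeff_expPS_eq_coeff_S hf (show n + 1 < n + 2 by omega),
    ← coeff_derivative, derivative_S, coeff_mul, coeff_mul]
  apply Finset.sum_congr rfl
  intro x hx
  rw [Finset.HasAntidiagonal.mem_antidiagonal] at hx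
  rw [coeff_expPS_eq_coeff_S hf (show x.2 < n + 1 by omega)]

lemma coeff_expNegX (n : ℕ) :
    coeff (R := R) n (expPS (-(X : PowerSeries R))) = algebraMap ℚ R ((-1) ^ n / n.factorial) := by
  rw [coeff_expPS, Finset.sum_eq_single n]
  · have : (-(X : PowerSeries R)) ^ n = C (R := R) ((-1) ^ n) * X ^ n := by
      rw [neg_pow]
      congr 1
      simp
    rw [this, coeff_C_mul, coeff_X_pow, if_pos rfl, mul_one,
      show ((-1 : R)) ^ n = algebraMap ℚ R ((-1) ^ n) by rw [map_pow, map_neg, map_one],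
      ← map_mul]
    congr 1
    ring
  · intro k _ hk
    have : (-(X : PowerSeries R)) ^ k = C (R := R) ((-1) ^ k) * X ^ k := by
      rw [neg_pow]
      congr 1
      simp
    rw [this, coeff_C_mul, coeff_X_pow, if_neg (by omega), mul_zero, mul_zero]
  · intro h
    exact absurd (Finset.self_mem_range_succ n) h

lemma derivative_expNegX :
    derivative R (expPS (-(X : PowerSeries R))) = -(expPS (-(X : PowerSeries R))) := by
  ext n
  rw [coeff_derivative, coeff_expNegX, map_neg, coeff_expNegX,
    show ((n : R) + 1) = algebraMap ℚ R ((n : ℚ) + 1) by push_cast; simp,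
    ← map_mul, ← map_neg]
  congr 1
  rw [Nat.factorial_succ]
  have h1 : ((n.factorial : ℚ)) ≠ 0 := by positivity
  have h2 : ((n : ℚ) + 1) ≠ 0 := by positivity
  push_cast
  field_simp <;> ring

variable (E lam : R)

lemma coeff_logMul (n : ℕ) :
    coeff (R := R) n (logOnePlus (C (R := R) lam * X)) =
      algebraMap ℚ R ((-1) ^ (n + 1) / n) * lam ^ n := by
  rw [coeff_logOnePlus, Finset.sum_eq_single n]
  · have : (C (R := R) lam * X) ^ n = C (R := R) (lam ^ n) * X ^ n := by
      rw [mul_pow, map_pow]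
    rw [this, coeff_C_mul, coeff_X_pow, if_pos rfl, mul_one]
  · intro k _ hk
    have : (C (R := R) lam * (X : PowerSeries R)) ^ k = C (R := R) (lam ^ k) * X ^ k := by
      rw [mul_pow, map_pow]
    rw [this, coeff_C_mul, coeff_X_pow, if_neg (by omega), mul_zero, mul_zero]
  · intro h
    exact absurd (Finset.self_mem_range_succ n) h

lemma constantCoeff_logMul : constantCoeff (R := R) (logOnePlus (C (R := R) lam * X)) = 0 := by
  rw [← coeff_zero_eq_constantCoeff, coeff_logMul]
  norm_num

lemma coeff_D_logMul (n : ℕ) :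
    coeff (R := R) n (derivative R (logOnePlus (C (R := R) lam * X))) = (-1 : R) ^ n * lam ^ (n + 1) := by
  rw [coeff_derivative, coeff_logMul]
  rw [show ((n : R) + 1) = algebraMap ℚ R ((n : ℚ) + 1) by push_cast; simp]
  have h2 : ((n : ℚ) + 1) ≠ 0 := by positivity
  have hq : ((-1 : ℚ)) ^ (n + 1 + 1) / (((n + 1 : ℕ)) : ℚ) * ((n : ℚ) + 1) = (-1) ^ n := by
    push_cast
    rw [div_mul_cancel₀ _ h2, pow_succ, pow_succ]
    ring
  calc algebraMap ℚ R ((-1) ^ (n + 1 + 1) / ((n + 1 : ℕ) : ℚ)) * lam ^ (n + 1) *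
        algebraMap ℚ R ((n : ℚ) + 1)
      = algebraMap ℚ R ((-1) ^ (n + 1 + 1) / ((n + 1 : ℕ) : ℚ) * ((n : ℚ) + 1)) * lam ^ (n + 1) := by
        rw [map_mul]; ring
    _ = algebraMap ℚ R ((-1) ^ n) * lam ^ (n + 1) := by rw [hq]
    _ = (-1 : R) ^ n * lam ^ (n + 1) := by rw [map_pow, map_neg, map_one]

lemma onePlus_mul_D_logMul :
    (1 + C (R := R) lam * X) * derivative R (logOnePlus (C (R := R) lam * X)) = C (R := R) lam := by
  ext n
  rw [add_mul, one_mul, map_add, mul_assoc, coeff_C_mul]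
  cases n with
  | zero =>
    rw [coeff_D_logMul]
    have : coeff (R := R) 0 ((X : PowerSeries R) * derivative R (logOnePlus (C (R := R) lam * X))) = 0 := by
      rw [coeff_zero_eq_constantCoeff, map_mul]
      simp
    rw [this, mul_zero, add_zero, coeff_zero_C]
    simp
  | succ m =>
    rw [coeff_D_logMul, coeff_succ_X_mul, coeff_D_logMul, coeff_C, if_neg (by omega)]
    ring_nf
    try (rw [pow_succ]; ring)

end Statement4Aux

namespace Statement4Aux

variable {R : Type*} [CommRing R] [Algebra ℚ R] (E lam : R)

local notation "L" => logOnePlus (C (R := R) lam * (X : PowerSeries R))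
local notation "G" => expPS (C (R := R) E * logOnePlus (C (R := R) lam * (X : PowerSeries R)))

lemma constantCoeff_EL : constantCoeff (R := R) (C (R := R) E * L) = 0 := by
  rw [map_mul, constantCoeff_logMul, mul_zero]

lemma g_ode :
    (1 + C (R := R) lam * X) * derivative R G = C (R := R) lam * C (R := R) E * G := by
  have hD : derivative R G = C (R := R) E * derivative R L * G := by
    rw [derivative_expPS (constantCoeff_EL E lam)]
    congr 1
    rw [Derivation.leibniz, derivative_C]
    simp [smul_eq_mul, mul_comm]
  rw [hD]
  calc (1 + C (R := R) lam * X) * (C (R := R) E * derivative R L * G)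
      = C (R := R) E * ((1 + C (R := R) lam * X) * derivative R L) * G := by ring
    _ = C (R := R) lam * C (R := R) E * G := by rw [onePlus_mul_D_logMul]; ring

lemma g_rec (n : ℕ) :
    coeff (R := R) (n + 1) G * (n + 1) + lam * (coeff (R := R) n G * n) = lam * E * coeff (R := R) n G := by
  have h := congrArg (coeff (R := R) n) (g_ode E lam)
  rw [add_mul, one_mul, map_add, mul_assoc, coeff_C_mul] at h
  rw [← coeff_derivative]
  have hX : coeff (R := R) n ((X : PowerSeries R) * derivative R G) = coeff (R := R) n G * n := by
    cases n with
    | zero =>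
      rw [coeff_zero_eq_constantCoeff, map_mul]
      simp
    | succ m =>
      rw [coeff_succ_X_mul, coeff_derivative]
      push_cast
      ring
  rw [hX] at h
  rw [mul_assoc, coeff_C_mul, coeff_C_mul] at h
  linear_combination h

lemma coeff_g_zero : coeff (R := R) 0 G = 1 := by
  rw [coeff_expPS]
  simp

lemma coeff_g (n : ℕ) :
    coeff (R := R) n G = algebraMap ℚ R (1 / n.factorial) *
      (lam ^ n * ∏ j ∈ range n, (E - (j : R))) := by
  induction n with
  | zero => simp [coeff_g_zero]
  | succ n ih =>
    have hrec := g_rec E lam n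
    have hkey : coeff (R := R) (n + 1) G * ((n : R) + 1) = lam * (E - n) * coeff (R := R) n G := by
      linear_combination hrec
    have hinv : algebraMap ℚ R (1 / ((n : ℚ) + 1)) * ((n : R) + 1) = 1 := by
      rw [show ((n : R) + 1) = algebraMap ℚ R ((n : ℚ) + 1) by push_cast; simp, ← map_mul]
      have : ((n : ℚ) + 1) ≠ 0 := by positivity
      field_simp
      exact map_one _
    calc coeff (R := R) (n + 1) G
        = algebraMap ℚ R (1 / ((n : ℚ) + 1)) * (coeff (R := R) (n + 1) G * ((n : R) + 1)) := by
          rw [show algebraMap ℚ R (1 / ((n : ℚ) + 1)) * (coeff (R := R) (n + 1) G * ((n : R) + 1)) =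
            (algebraMap ℚ R (1 / ((n : ℚ) + 1)) * ((n : R) + 1)) * coeff (R := R) (n + 1) G by ring,
            hinv, one_mul]
      _ = algebraMap ℚ R (1 / ((n : ℚ) + 1)) * (lam * (E - n) * coeff (R := R) n G) := by rw [hkey]
      _ = algebraMap ℚ R (1 / (n + 1).factorial) *
            (lam ^ (n + 1) * ∏ j ∈ range (n + 1), (E - (j : R))) := by
          rw [ih, prod_range_succ, Nat.factorial_succ]
          have h1 : (1 : ℚ) / ((n + 1) * n.factorial : ℕ) =
              (1 / ((n : ℚ) + 1)) * (1 / n.factorial) := by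
            have h2 : ((n.factorial : ℚ)) ≠ 0 := by positivity
            have h3 : ((n : ℚ) + 1) ≠ 0 := by positivity
            push_cast
            field_simp
          rw [h1, map_mul, pow_succ]
          ring

lemma iterate_eq (q : PowerSeries R) (p : ℕ) :
    (fun f => f + derivative R f)^[p] (expPS (-(X : PowerSeries R)) * q) =
      expPS (-(X : PowerSeries R)) * ((fun f => derivative R f)^[p] q) := by
  induction p with
  | zero => simp
  | succ p ih =>
    rw [Function.iterate_succ_apply', Function.iterate_succ_apply', ih]
    set e := expPS (-(X : PowerSeries R))
    set u := (fun f => derivative R f)^[p] q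
    show e * u + derivative R (e * u) = e * derivative R u
    rw [Derivation.leibniz, smul_eq_mul, smul_eq_mul, derivative_expNegX]
    ring

lemma coeff_iterate_deriv (f : PowerSeries R) (p : ℕ) (n : ℕ) :
    coeff (R := R) n ((fun f => derivative R f)^[p] f) =
      (∏ j ∈ range p, ((n : R) + j + 1)) * coeff (R := R) (n + p) f := by
  induction p generalizing f with
  | zero => simp
  | succ p ih =>
    rw [Function.iterate_succ_apply]
    rw [show (fun f => derivative R f)^[p] ((fun f => derivative R f) f)
        = (fun f => derivative R f)^[p] (derivative R f) from rfl]
    rw [ih (derivative R f), coeff_derivative, prod_range_succ]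
    push_cast [show n + (p + 1) = n + p + 1 from rfl]
    ring

end Statement4Aux

theorem statement4 {R : Type*} [CommRing R] [Algebra ℚ R] (E lam : R) (p : ℕ) :
    PowerSeries.constantCoeff (R := R)
        ((fun f => f + PowerSeries.derivative R f)^[p]
          (expPS (-(PowerSeries.X : PowerSeries R)) *
            expPS (PowerSeries.C (R := R) E * logOnePlus (PowerSeries.C (R := R) lam * PowerSeries.X))))
      = lam ^ p * ∏ j ∈ Finset.range p, (E - (j : R)) := by
  rw [Statement4Aux.iterate_eq, map_mul]
  have he : PowerSeries.constantCoeff (R := R) (expPS (-(PowerSeries.X : PowerSeries R))) = 1 := by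
    rw [← PowerSeries.coeff_zero_eq_constantCoeff, Statement4Aux.coeff_expNegX]
    simp
  rw [he, one_mul, ← PowerSeries.coeff_zero_eq_constantCoeff,
    Statement4Aux.coeff_iterate_deriv, Statement4Aux.coeff_g, zero_add]
  have hprod : (∏ j ∈ Finset.range p, (((0 : ℕ) : R) + (j : R) + 1)) = (p.factorial : R) := by
    rw [← Finset.prod_range_add_one_eq_factorial p, Nat.cast_prod]
    apply Finset.prod_congr rfl
    intro j _
    push_cast
    ring
  rw [hprod]
  have hfac : (p.factorial : R) * algebraMap ℚ R (1 / p.factorial) = 1 := by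
    rw [show ((p.factorial : R)) = algebraMap ℚ R (p.factorial : ℚ) by simp, ← map_mul]
    have : ((p.factorial : ℚ)) ≠ 0 := by positivity
    field_simp
    exact map_one _
  calc (p.factorial : R) * (algebraMap ℚ R (1 / p.factorial) *
        (lam ^ p * ∏ j ∈ Finset.range p, (E - (j : R))))
      = ((p.factorial : R) * algebraMap ℚ R (1 / p.factorial)) *
        (lam ^ p * ∏ j ∈ Finset.range p, (E - (j : R))) := by ring
    _ = lam ^ p * ∏ j ∈ Finset.range p, (E - (j : R)) := by rw [hfac, one_mul]

end
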